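/- In Construction 1, for c ≠ e in F_2^t, the orthogonal sets S_{c,α} and S_{e,δ} are orthogonal to each other (every sequence in one is orthogonal to every sequence in the other) if and only if π^{-1}(α + δ) ∉ {γ^{[y] + i_{c+e}} : y ∈ F_2^s}. In particular, S_{c,α} ⊥ S_{e,δ} whenever c ≠ e and α = δ. -/
import Mathlib


open Finset

/-- mod-2 inner product on `F_2^n`. -/
def dotp {n : ℕ} (a b : Fin n → ZMod 2) : ZMod 2 := ∑ i, a i * b i

/-- `(-1)^v` for `v ∈ F_2`. -/
def sgn (v : ZMod 2) : ℤ := (-1 : ℤ) ^ v.val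

/-- Integer inner product of the ±1-sequences of two Boolean functions on F_2^s × F_2^t. -/
def seqInnerP {s t : ℕ} (f g : (Fin s → ZMod 2) × (Fin t → ZMod 2) → ZMod 2) : ℤ :=
  ∑ p : (Fin s → ZMod 2) × (Fin t → ZMod 2), sgn (f p) * sgn (g p)

/-- the integer `[y]` represented by the binary vector `y ∈ F_2^s`. -/
def intRep {s : ℕ} (y : Fin s → ZMod 2) : ℕ := ∑ j : Fin s, (y j).val * 2 ^ (j : ℕ)

lemma sgn_add : ∀ a b : ZMod 2, sgn (a + b) = sgn a * sgn b := by decide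

lemma sgn_one_add : ∀ a : ZMod 2, sgn (1 + a) = - sgn a := by decide

lemma sgn_zero : sgn 0 = 1 := by decide

lemma dotp_add_left {n : ℕ} (a b x : Fin n → ZMod 2) :
    dotp (a + b) x = dotp a x + dotp b x := by
  simp [dotp, add_mul, Finset.sum_add_distrib]

lemma dotp_add_right {n : ℕ} (v a b : Fin n → ZMod 2) :
    dotp v (a + b) = dotp v a + dotp v b := by
  simp [dotp, mul_add, Finset.sum_add_distrib]

lemma dotp_zero_left {n : ℕ} (x : Fin n → ZMod 2) : dotp 0 x = 0 := by
  simp [dotp]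

lemma dotp_single {n : ℕ} (v : Fin n → ZMod 2) (i : Fin n) :
    dotp v (Pi.single i 1) = v i := by
  simp [dotp, Pi.single_apply]

lemma sum_sgn_dotp {n : ℕ} (v : Fin n → ZMod 2) :
    ∑ x : Fin n → ZMod 2, sgn (dotp v x) = if v = 0 then (2 ^ n : ℤ) else 0 := by
  split_ifs with hv
  · subst hv
    have h1 : ∀ x : Fin n → ZMod 2, sgn (dotp 0 x) = 1 := fun x => by
      rw [dotp_zero_left, sgn_zero]
    simp only [h1, Finset.sum_const, Finset.card_univ, nsmul_eq_mul, mul_one]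
    norm_num
  · obtain ⟨i, hi⟩ := Function.ne_iff.mp hv
    have h01 : ∀ a : ZMod 2, a ≠ 0 → a = 1 := by decide
    have hvi : v i = 1 := h01 _ (by simpa using hi)
    have key : ∑ x : Fin n → ZMod 2, sgn (dotp v x)
        = - ∑ x : Fin n → ZMod 2, sgn (dotp v x) := by
      conv_lhs => rw [← Equiv.sum_comp (Equiv.addLeft (Pi.single i (1 : ZMod 2)))
        (fun x => sgn (dotp v x))]
      rw [← Finset.sum_neg_distrib]
      refine Finset.sum_congr rfl fun x _ => ?_
      simp only [Equiv.coe_addLeft]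
      rw [dotp_add_right, dotp_single, hvi, sgn_one_add]
    linarith

lemma add_self_zmod2 {n : ℕ} (a : Fin n → ZMod 2) : a + a = 0 := by
  have hz : ∀ u : ZMod 2, u + u = 0 := by decide
  funext i; exact hz (a i)

lemma add_eq_zero_iff_zmod2 {n : ℕ} (a b : Fin n → ZMod 2) : a + b = 0 ↔ a = b := by
  have hz : ∀ u v : ZMod 2, u + v = 0 ↔ u = v := by decide
  constructor
  · intro h; funext i; exact (hz _ _).mp (congrFun h i)
  · intro h; subst h; exact add_self_zmod2 a

/-- for c ≠ e, S_{c,α} ⊥ S_{e,δ} iff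
π⁻¹(α+δ) ∉ {γ^{[y]+i_{c+e}} : y ∈ F_2^s}; in particular S_{c,α} ⊥ S_{e,δ}
whenever α = δ. -/
theorem stmt_8 {m s t : ℕ} (hm : m = s + t) (hst : s < t)
    (γ : GaloisField 2 t) (hγ : ∀ z : GaloisField 2 t, z ≠ 0 → ∃ n : ℕ, γ ^ n = z)
    (π : GaloisField 2 t ≃ₗ[ZMod 2] (Fin t → ZMod 2))
    (c e : Fin t → ZMod 2) (hce : c ≠ e)
    (ic ie ice : ℕ) (hic : γ ^ ic = π.symm c) (hie : γ ^ ie = π.symm e)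
    (hice : γ ^ ice = π.symm (c + e))
    (α δ : Fin t → ZMod 2) :
    ((∀ β θ : Fin s → ZMod 2,
        seqInnerP
          (fun p : (Fin s → ZMod 2) × (Fin t → ZMod 2) =>
            dotp (π (γ ^ (ic + intRep p.1))) p.2 + dotp β p.1 + dotp α p.2)
          (fun p : (Fin s → ZMod 2) × (Fin t → ZMod 2) =>
            dotp (π (γ ^ (ie + intRep p.1))) p.2 + dotp θ p.1 + dotp δ p.2) = 0) ↔
      ¬ ∃ y : Fin s → ZMod 2, γ ^ (intRep y + ice) = π.symm (α + δ)) ∧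
    (α = δ → ∀ β θ : Fin s → ZMod 2,
        seqInnerP
          (fun p : (Fin s → ZMod 2) × (Fin t → ZMod 2) =>
            dotp (π (γ ^ (ic + intRep p.1))) p.2 + dotp β p.1 + dotp α p.2)
          (fun p : (Fin s → ZMod 2) × (Fin t → ZMod 2) =>
            dotp (π (γ ^ (ie + intRep p.1))) p.2 + dotp θ p.1 + dotp δ p.2) = 0) := by
  classical
  -- the key algebraic identity on field elements
  have hπA : ∀ y : Fin s → ZMod 2,
      π (γ ^ (intRep y + ice)) = π (γ ^ (ic + intRep y)) + π (γ ^ (ie + intRep y)) := by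
    intro y
    rw [← map_add]
    congr 1
    rw [pow_add γ ic, pow_add γ ie, hic, hie, ← add_mul, ← map_add, ← hice, pow_add]
    ring
  -- the main computation of the inner product
  have main : ∀ β θ : Fin s → ZMod 2,
      seqInnerP
          (fun p : (Fin s → ZMod 2) × (Fin t → ZMod 2) =>
            dotp (π (γ ^ (ic + intRep p.1))) p.2 + dotp β p.1 + dotp α p.2)
          (fun p : (Fin s → ZMod 2) × (Fin t → ZMod 2) =>
            dotp (π (γ ^ (ie + intRep p.1))) p.2 + dotp θ p.1 + dotp δ p.2)
      = ∑ y : Fin s → ZMod 2, sgn (dotp (β + θ) y) *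
          (if γ ^ (intRep y + ice) = π.symm (α + δ) then (2 ^ t : ℤ) else 0) := by
    intro β θ
    unfold seqInnerP
    rw [Fintype.sum_prod_type]
    refine Finset.sum_congr rfl fun y _ => ?_
    have step : ∀ x : Fin t → ZMod 2,
        sgn (dotp (π (γ ^ (ic + intRep y))) x + dotp β y + dotp α x) *
        sgn (dotp (π (γ ^ (ie + intRep y))) x + dotp θ y + dotp δ x)
        = sgn (dotp (β + θ) y) *
          sgn (dotp (π (γ ^ (intRep y + ice)) + (α + δ)) x) := by
      intro x
      rw [← sgn_add, ← sgn_add]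
      congr 1
      rw [hπA y]
      simp only [dotp_add_left]
      ring
    calc ∑ x : Fin t → ZMod 2,
          sgn (dotp (π (γ ^ (ic + intRep y))) x + dotp β y + dotp α x) *
          sgn (dotp (π (γ ^ (ie + intRep y))) x + dotp θ y + dotp δ x)
        = ∑ x : Fin t → ZMod 2, sgn (dotp (β + θ) y) *
            sgn (dotp (π (γ ^ (intRep y + ice)) + (α + δ)) x) :=
          Finset.sum_congr rfl fun x _ => step x
      _ = sgn (dotp (β + θ) y) *
            ∑ x : Fin t → ZMod 2, sgn (dotp (π (γ ^ (intRep y + ice)) + (α + δ)) x) :=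
          (Finset.mul_sum _ _ _).symm
      _ = sgn (dotp (β + θ) y) *
            (if γ ^ (intRep y + ice) = π.symm (α + δ) then (2 ^ t : ℤ) else 0) := by
          rw [sum_sgn_dotp]
          congr 1
          refine if_congr ?_ rfl rfl
          rw [add_eq_zero_iff_zmod2]
          constructor
          · intro h
            have := congrArg π.symm h
            simpa using this
          · intro h
            rw [h, LinearEquiv.apply_symm_apply]
  -- the iff part
  have hiff : (∀ β θ : Fin s → ZMod 2,
      seqInnerP
          (fun p : (Fin s → ZMod 2) × (Fin t → ZMod 2) =>
            dotp (π (γ ^ (ic + intRep p.1))) p.2 + dotp β p.1 + dotp α p.2)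
          (fun p : (Fin s → ZMod 2) × (Fin t → ZMod 2) =>
            dotp (π (γ ^ (ie + intRep p.1))) p.2 + dotp θ p.1 + dotp δ p.2) = 0) ↔
      ¬ ∃ y : Fin s → ZMod 2, γ ^ (intRep y + ice) = π.symm (α + δ) := by
    constructor
    · intro hall
      rintro ⟨y₀, hy₀⟩
      have h0 := hall 0 0
      rw [main 0 0] at h0
      have hone : ∀ y : Fin s → ZMod 2,
          sgn (dotp ((0 : Fin s → ZMod 2) + 0) y) = 1 := fun y => by
        rw [add_zero, dotp_zero_left, sgn_zero]
      simp only [hone, one_mul] at h0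
      have hpos : (0 : ℤ) < ∑ y : Fin s → ZMod 2,
          (if γ ^ (intRep y + ice) = π.symm (α + δ) then (2 ^ t : ℤ) else 0) := by
        refine Finset.sum_pos' (fun y _ => ?_) ⟨y₀, Finset.mem_univ _, ?_⟩
        · split_ifs <;> positivity
        · rw [if_pos hy₀]; positivity
      omega
    · intro hnot β θ
      rw [main β θ]
      refine Finset.sum_eq_zero fun y _ => ?_
      rw [if_neg (fun h => hnot ⟨y, h⟩), mul_zero]
  refine ⟨hiff, ?_⟩
  intro hαδ β θ
  subst hαδ
  refine hiff.mpr ?_ β θ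
  rintro ⟨y, hy⟩
  rw [add_self_zmod2, map_zero] at hy
  -- now γ ^ (intRep y + ice) = 0, derive a contradiction
  have hce0 : π.symm (c + e) ≠ 0 := by
    intro h0
    apply hce
    have := congrArg π h0
    rw [LinearEquiv.apply_symm_apply, map_zero] at this
    exact (add_eq_zero_iff_zmod2 c e).mp this
  by_cases hn : intRep y + ice = 0
  · rw [hn, pow_zero] at hy; exact one_ne_zero hy
  · have hγ0 : γ = 0 := (pow_eq_zero_iff hn).mp hy
    by_cases hi0 : ice = 0
    · -- then intRep y ≠ 0, so s ≥ 1, so t ≥ 2; but the field has ≤ 2 elements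
      have hall2 : ∀ z : GaloisField 2 t, z = 0 ∨ z = 1 := by
        intro z
        by_cases h0 : z = 0
        · exact Or.inl h0
        · right
          obtain ⟨k, hk⟩ := hγ z h0
          rw [hγ0] at hk
          cases k with
          | zero => simpa using hk.symm
          | succ k => rw [zero_pow (Nat.succ_ne_zero k)] at hk; exact absurd hk.symm h0
      have hs : s ≠ 0 := by
        rintro rfl
        apply hn
        rw [hi0]
        simp [intRep]
      haveI : Fintype (GaloisField 2 t) := Fintype.ofFinite _
      have hsub : (Finset.univ : Finset (GaloisField 2 t)) ⊆ {0, 1} := fun z _ => by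
        rcases hall2 z with h | h <;> simp [h]
      have hle : Fintype.card (GaloisField 2 t) ≤ 2 := by
        calc Fintype.card (GaloisField 2 t) = Finset.univ.card := Finset.card_univ.symm
          _ ≤ ({0, 1} : Finset (GaloisField 2 t)).card := Finset.card_le_card hsub
          _ ≤ 2 := Finset.card_insert_le 0 {1} |>.trans (by simp)
      have hcard : Fintype.card (GaloisField 2 t) = 2 ^ t := by
        rw [← Nat.card_eq_fintype_card]
        exact GaloisField.card 2 t (by omega)
      have h4 : (2 : ℕ) ^ 2 ≤ 2 ^ t := Nat.pow_le_pow_right (by norm_num) (by omega)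
      omega
    · rw [hγ0, zero_pow hi0] at hice
      exact hce0 hice.symm
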